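/- (Verma module realizes the sl(2) relations) As linear operators on M, the commutator identities A₋ ∘ A₊ − A₊ ∘ A₋ = 4·N, A₋ ∘ N − N ∘ A₋ = 2·A₋, and A₊ ∘ N − N ∘ A₊ = −2·A₊ hold. -/

import Mathlib

/-!
Verma module `M(h,f)` over the ℤ₂×ℤ₂ graded superalgebra of Rittenberg–Wyler,
realized on the space of finitely supported functions `ℕ × Fin 2 × Fin 2 →₀ ℂ`,
with basis vectors `e k μ ν`.
-/

noncomputable section

/-- Index set for the basis of the Verma module. -/
abbrev Idx : Type := ℕ × Fin 2 × Fin 2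

/-- The underlying space of the Verma module `M(h,f)`. -/
abbrev Mmod : Type := Idx →₀ ℂ

/-- The standard basis vector `e(k,μ,ν)`. -/
def e (k : ℕ) (μ ν : Fin 2) : Mmod := Finsupp.single (k, μ, ν) 1

/-- Build a linear operator on `Mmod` from its values on basis vectors. -/
def mkOp (φ : Idx → Mmod) : Mmod →ₗ[ℂ] Mmod := Finsupp.lift Mmod ℂ Idx φ

/-- The lowering operator `A₋`.
`A₋ e(k,μ,ν) = 4k(h+k+μ+ν−1)·e(k−1,μ,ν) + 4(h+f)·δ_{μ,1}δ_{ν,1}·e(k,0,0)`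
(with the convention `e(−1,μ,ν) = 0`, automatic since the coefficient vanishes at `k = 0`). -/
def Am (h f : ℂ) : Mmod →ₗ[ℂ] Mmod :=
  mkOp fun p =>
    (4 * (p.1 : ℂ) * (h + (p.1 : ℂ) + ((p.2.1 : ℕ) : ℂ) + ((p.2.2 : ℕ) : ℂ) - 1))
        • e (p.1 - 1) p.2.1 p.2.2
    + (if p.2.1 = 1 ∧ p.2.2 = 1 then (4 * (h + f)) • e p.1 0 0 else 0)

/-- The lowering operator `c₊`.
`c₊ e(k,μ,ν) = 2(h+2k+2ν−f)·δ_{μ,1}·e(k,0,ν) + (−1)^μ·2k·δ_{ν,0}·e(k−1,μ,1)`. -/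
def cp (h f : ℂ) : Mmod →ₗ[ℂ] Mmod :=
  mkOp fun p =>
    (if p.2.1 = 1 then
        (2 * (h + 2 * (p.1 : ℂ) + 2 * ((p.2.2 : ℕ) : ℂ) - f)) • e p.1 0 p.2.2 else 0)
    + (if p.2.2 = 0 then
        ((-1 : ℂ) ^ (p.2.1 : ℕ) * (2 * (p.1 : ℂ))) • e (p.1 - 1) p.2.1 1 else 0)

/-- The lowering operator `c₋`.
`c₋ e(k,μ,ν) = (−1)^μ·2(h+f)·δ_{ν,1}·e(k,μ,0) + 2k·δ_{μ,0}·e(k−1,1,ν)`. -/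
def cm (h f : ℂ) : Mmod →ₗ[ℂ] Mmod :=
  mkOp fun p =>
    (if p.2.2 = 1 then
        ((-1 : ℂ) ^ (p.2.1 : ℕ) * (2 * (h + f))) • e p.1 p.2.1 0 else 0)
    + (if p.2.1 = 0 then (2 * (p.1 : ℂ)) • e (p.1 - 1) 1 p.2.2 else 0)

/-- The raising operator `A₊`: `A₊ e(k,μ,ν) = e(k+1,μ,ν)`. -/
def Ap : Mmod →ₗ[ℂ] Mmod := mkOp fun p => e (p.1 + 1) p.2.1 p.2.2

/-- The raising operator `d₊`: `d₊ e(k,μ,ν) = δ_{μ,0}·e(k,1,ν)`. -/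
def dp : Mmod →ₗ[ℂ] Mmod := mkOp fun p => if p.2.1 = 0 then e p.1 1 p.2.2 else 0

/-- The raising operator `d₋`:
`d₋ e(k,μ,ν) = (−1)^μ·δ_{ν,0}·e(k,μ,1) + 2·δ_{μ,1}·e(k+1,0,ν)`. -/
def dm : Mmod →ₗ[ℂ] Mmod :=
  mkOp fun p =>
    (if p.2.2 = 0 then ((-1 : ℂ) ^ (p.2.1 : ℕ)) • e p.1 p.2.1 1 else 0)
    + (if p.2.1 = 1 then (2 : ℂ) • e (p.1 + 1) 0 p.2.2 else 0)

/-- The Cartan operator `N`: `N e(k,μ,ν) = (h+2k+μ+ν)·e(k,μ,ν)`. -/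
def Nop (h : ℂ) : Mmod →ₗ[ℂ] Mmod :=
  mkOp fun p =>
    (h + 2 * (p.1 : ℂ) + ((p.2.1 : ℕ) : ℂ) + ((p.2.2 : ℕ) : ℂ)) • e p.1 p.2.1 p.2.2

/-- The Cartan operator `F̃`: `F̃ e(k,μ,ν) = (f+μ−ν)·e(k,μ,ν)`. -/
def Fop (f : ℂ) : Mmod →ₗ[ℂ] Mmod :=
  mkOp fun p =>
    (f + ((p.2.1 : ℕ) : ℂ) - ((p.2.2 : ℕ) : ℂ)) • e p.1 p.2.1 p.2.2

/-- The set of basis vectors of level `m` (the level of `e(k,μ,ν)` is `2k+μ+ν`). -/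
def levelVecs (m : ℕ) : Set Mmod :=
  {v | ∃ (k : ℕ) (μ ν : Fin 2), 2 * k + (μ : ℕ) + (ν : ℕ) = m ∧ v = e k μ ν}

/-- `v` is a singular vector at level `m ≥ 1`: it is nonzero, lies in the span of the
level-`m` basis vectors, and is annihilated by `A₋`, `c₊` and `c₋`. -/
def IsSingular (h f : ℂ) (m : ℕ) (v : Mmod) : Prop :=
  1 ≤ m ∧ v ≠ 0 ∧ v ∈ Submodule.span ℂ (levelVecs m) ∧
    Am h f v = 0 ∧ cp h f v = 0 ∧ cm h f v = 0

/-!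
`N` is diagonal in the basis `e(k,μ,ν)`, with eigenvalue `h + 2k + μ + ν`. `A₊` raises this
weight by `2` and both terms of `A₋` lower it by `2`, which gives the last two relations. For the
first, the `δ_{μ,1}δ_{ν,1}` terms of `A₋A₊` and `A₊A₋` cancel, and what remains is
`4(k+1)(h+k+μ+ν) − 4k(h+k+μ+ν−1) = 4(h+2k+μ+ν)`.
-/

def weight (h : ℂ) (k : ℕ) (μ ν : Fin 2) : ℂ := h + 2 * k + (μ : ℕ) + (ν : ℕ)

lemma mkOp_e (φ : Idx → Mmod) (k : ℕ) (μ ν : Fin 2) : mkOp φ (e k μ ν) = φ (k, μ, ν) := by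
  simp [mkOp, e]

lemma linearMap_ext_e {F G : Mmod →ₗ[ℂ] Mmod} (H : ∀ k μ ν, F (e k μ ν) = G (e k μ ν)) :
    F = G :=
  Finsupp.lhom_ext' fun ⟨k, μ, ν⟩ => LinearMap.ext_ring (H k μ ν)

section

variable (h f : ℂ) (k : ℕ) (μ ν : Fin 2)

lemma Ap_e : Ap (e k μ ν) = e (k + 1) μ ν := mkOp_e _ k μ ν

lemma Nop_e : Nop h (e k μ ν) = weight h k μ ν • e k μ ν := mkOp_e _ k μ ν

lemma Am_e : Am h f (e k μ ν) =
    (4 * (k : ℂ) * (h + k + (μ : ℕ) + (ν : ℕ) - 1)) • e (k - 1) μ ν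
      + (if μ = 1 ∧ ν = 1 then (4 * (h + f)) • e k 0 0 else 0) :=
  mkOp_e _ k μ ν

lemma Nop_Ap_e : Nop h (Ap (e k μ ν)) = (weight h k μ ν + 2) • Ap (e k μ ν) := by
  rw [Ap_e, Nop_e, weight, weight]
  push_cast
  ring_nf

lemma Nop_Am_e : Nop h (Am h f (e k μ ν)) = (weight h k μ ν - 2) • Am h f (e k μ ν) := by
  rcases k with _ | k <;> fin_cases μ <;> fin_cases ν <;>
    simp [Am_e, Nop_e, weight] <;> module

lemma Am_Ap_e_sub_Ap_Am_e :
    Am h f (Ap (e k μ ν)) - Ap (Am h f (e k μ ν)) = (4 * weight h k μ ν) • e k μ ν := by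
  rcases k with _ | k <;> fin_cases μ <;> fin_cases ν <;>
    simp [Am_e, Ap_e, weight] <;> module

end

lemma comp_Nop_sub_Nop_comp_of_weight_shift {h : ℂ} (F : Mmod →ₗ[ℂ] Mmod) (c : ℂ)
    (hF : ∀ k μ ν, Nop h (F (e k μ ν)) = (weight h k μ ν + c) • F (e k μ ν)) :
    F ∘ₗ Nop h - Nop h ∘ₗ F = (-c) • F :=
  linearMap_ext_e fun k μ ν => by
    simp only [LinearMap.sub_apply, LinearMap.comp_apply, LinearMap.smul_apply, Nop_e, map_smul, hF]
    module

/-- The Verma module realizes the `sl(2)` relations: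
`[A₋,A₊] = 4N`, `[A₋,N] = 2A₋`, `[A₊,N] = −2A₊`. -/
theorem sl2_relations (h f : ℂ) :
    Am h f ∘ₗ Ap - Ap ∘ₗ Am h f = (4 : ℂ) • Nop h ∧
    Am h f ∘ₗ Nop h - Nop h ∘ₗ Am h f = (2 : ℂ) • Am h f ∧
    Ap ∘ₗ Nop h - Nop h ∘ₗ Ap = (-2 : ℂ) • Ap := by
  refine ⟨linearMap_ext_e fun k μ ν => ?_, ?_, comp_Nop_sub_Nop_comp_of_weight_shift Ap 2 (Nop_Ap_e h)⟩
  · simp only [LinearMap.sub_apply, LinearMap.comp_apply, LinearMap.smul_apply,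
      Am_Ap_e_sub_Ap_Am_e, Nop_e, smul_smul]
  · simpa [sub_eq_add_neg] using comp_Nop_sub_Nop_comp_of_weight_shift (Am h f) (-2) (Nop_Am_e h f)
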